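/- arXiv:2011.05000 — 2 statements merged into one kernel-verified Lean document; each statement's English description precedes it below -/
import Mathlib

section
/- Rectangular complex interval multiplication has no zero divisors: if I, J are rectangular complex intervals with I·J = {0}, then I = {0} or J = {0}. -/
open Set Pointwise

noncomputable section

/-- Pointwise addition of sets of reals. -/
def sadd (X Y : Set ℝ) : Set ℝ := Set.image2 (· + ·) X Y

/-- Pointwise subtraction of sets of reals. -/
def ssub (X Y : Set ℝ) : Set ℝ := Set.image2 (· - ·) X Y

/-- Pointwise multiplication of sets of reals. -/
def smul' (X Y : Set ℝ) : Set ℝ := Set.image2 (· * ·) X Y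

/-- The rectangular complex interval `X + iY`. -/
def cI (X Y : Set ℝ) : Set ℂ := {z | z.re ∈ X ∧ z.im ∈ Y}

/-- Real parts of a set of complex numbers. -/
def reS (S : Set ℂ) : Set ℝ := Complex.re '' S

/-- Imaginary parts of a set of complex numbers. -/
def imS (S : Set ℂ) : Set ℝ := Complex.im '' S

/-- Complex interval multiplication:
`(X+iY)·(W+iZ) = (X·W − Y·Z) + i(X·Z + Y·W)`. -/
def cmul (S T : Set ℂ) : Set ℂ :=
  cI (ssub (smul' (reS S) (reS T)) (smul' (imS S) (imS T)))
     (sadd (smul' (reS S) (imS T)) (smul' (imS S) (reS T)))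

/-- `S` is a rectangular complex interval. -/
def IsRect (S : Set ℂ) : Prop :=
  ∃ a b c d : ℝ, a ≤ b ∧ c ≤ d ∧ S = cI (Set.Icc a b) (Set.Icc c d)

/- `cmul S T` contains every product `z * w` with `z ∈ S`, `w ∈ T`, so `cmul I J = {0}` forces
`z * w = 0` throughout `I × J`, and `ℂ` has no zero divisors. Since `{0}` is nonempty, so are `I`
and `J`, and for them lying in `{0}` means being `{0}`. -/

theorem subset_zero_or_subset_zero_of_forall_mul_eq_zero {M₀ : Type*} [MulZeroClass M₀]
    [NoZeroDivisors M₀] {S T : Set M₀} (h : ∀ s ∈ S, ∀ t ∈ T, s * t = 0) :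
    S ⊆ {0} ∨ T ⊆ {0} := by
  refine or_iff_not_imp_left.2 fun hS t ht => ?_
  obtain ⟨s, hs, hs0⟩ := not_subset.1 hS
  exact (mul_eq_zero.1 (h s hs t ht)).resolve_left hs0

theorem mul_mem_cmul {S T : Set ℂ} {z w : ℂ} (hz : z ∈ S) (hw : w ∈ T) : z * w ∈ cmul S T :=
  ⟨mem_image2_of_mem (mem_image2_of_mem (mem_image_of_mem _ hz) (mem_image_of_mem _ hw))
      (mem_image2_of_mem (mem_image_of_mem _ hz) (mem_image_of_mem _ hw)),
    mem_image2_of_mem (mem_image2_of_mem (mem_image_of_mem _ hz) (mem_image_of_mem _ hw))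
      (mem_image2_of_mem (mem_image_of_mem _ hz) (mem_image_of_mem _ hw))⟩

theorem nonempty_of_cmul_nonempty {S T : Set ℂ} (h : (cmul S T).Nonempty) :
    S.Nonempty ∧ T.Nonempty := by
  obtain ⟨_, ⟨_, ⟨_, ⟨s, hs, -⟩, _, ⟨t, ht, -⟩, -⟩, -⟩, -⟩ := h
  exact ⟨⟨s, hs⟩, ⟨t, ht⟩⟩

theorem cmul_no_zero_divisors_general (I J : Set ℂ)
    (h : cmul I J = {0}) : I = {0} ∨ J = {0} := by
  have hmul : ∀ z ∈ I, ∀ w ∈ J, z * w = 0 := fun z hz w hw =>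
    mem_singleton_iff.1 (h ▸ mul_mem_cmul hz hw)
  obtain ⟨hI, hJ⟩ := nonempty_of_cmul_nonempty (h ▸ singleton_nonempty 0)
  rw [← hI.subset_singleton_iff, ← hJ.subset_singleton_iff]
  exact subset_zero_or_subset_zero_of_forall_mul_eq_zero hmul

theorem cmul_no_zero_divisors (I J : Set ℂ) (hI : IsRect I) (hJ : IsRect J)
    (h : cmul I J = {0}) : I = {0} ∨ J = {0} :=
  cmul_no_zero_divisors_general I J h
end
end

section
/- (Krawczyk existence) Let F : ℂⁿ → ℂⁿ be a polynomial system, I a product of rectangular complex intervals, x ∈ I, and Y ∈ ℂ^{n×n} invertible. Let □F and □JF be interval enclosures of F and its Jacobian JF. If the Krawczyk set K_{x,Y}(I) = x − Y·□F(x) + (1ₙ − Y·□JF(I))(I − x) is contained in I, then F has a zero in I. -/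
/-!
Instead of Brouwer's theorem we use that the map `G z = z - Y F(z)` is nonexpansive. By the mean
value theorem `G z - G w = N (z - w)` with `N = 1 - Y M`, where `M` is an average of Jacobians
along the segment and so lies in `□JF(I)`. Every affine map `z ↦ x - Y F(x) + N (z - x)` with such
an `N` takes its values on `I` in `K_{x,Y}(I) ⊆ I`; hence `G(I) ⊆ I` and `N (I - I) ⊆ I - I`,
i.e. `G` is nonexpansive for the Minkowski gauge of `I - I`.
A nonexpansive self-map of a compact convex set has a fixed point: the damped maps
`x + t (G - x)`, `t < 1`, are contractions whose fixed points `z_t` satisfy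
`‖G z_t - z_t‖ ≤ (1 - t) diam I`, so a minimiser of `‖G z - z‖` on `I` is fixed by `G`.
As `Y` is invertible, that fixed point is a zero of `F`.
-/

open Set Pointwise

noncomputable section

variable {n : ℕ}

/-- The interval vector `I ∈ 𝕀ℂⁿ` determined by coordinate intervals `IV`. -/
def boxSet (IV : Fin n → Set ℂ) : Set (Fin n → ℂ) := {z | ∀ j, z j ∈ IV j}

/-- `F` is a square polynomial system. -/
def IsPolyMap (F : (Fin n → ℂ) → Fin n → ℂ) : Prop :=
  ∀ i, ∃ p : MvPolynomial (Fin n) ℂ, ∀ z, F z i = MvPolynomial.eval z p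

/-- The Jacobian matrix `JF(z)` of `F` at `z`. -/
def jac (F : (Fin n → ℂ) → Fin n → ℂ) (z : Fin n → ℂ) : Matrix (Fin n) (Fin n) ℂ :=
  fun i j => fderiv ℂ (fun w => F w i) z (Pi.single j 1)

/-- Entries of the interval matrix `1ₙ − Y·□JF(I)`, where `MJ` is the interval
enclosure of the Jacobian on `I`, computed in complex interval arithmetic. -/
def Bmat (Y : Matrix (Fin n) (Fin n) ℂ) (MJ : Fin n → Fin n → Set ℂ) :
    Fin n → Fin n → Set ℂ :=
  fun i j => ({(if i = j then (1 : ℂ) else 0)} : Set ℂ) - ∑ k, cmul {Y i k} (MJ k j)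

/-- Coordinates of the Krawczyk set
`K_{x,Y}(I) = x − Y·□F(x) + (1ₙ − Y·□JF(I))(I − x)`, where `FX` is the interval
enclosure `□F(x)` and `MJ` the interval enclosure `□JF(I)`. -/
def Kset (x : Fin n → ℂ) (Y : Matrix (Fin n) (Fin n) ℂ)
    (FX : Fin n → Set ℂ) (MJ : Fin n → Fin n → Set ℂ) (IV : Fin n → Set ℂ) :
    Fin n → Set ℂ :=
  fun i => (({x i} : Set ℂ) - ∑ j, cmul {Y i j} (FX j)) +
      ∑ j, cmul ((IV j) - {x j}) (Bmat Y MJ i j)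

/-- The `∞`-operator norm of a complex matrix (`Fin n → ℂ` carries the max norm). -/
def opNormInf (M : Matrix (Fin n) (Fin n) ℂ) : ℝ :=
  sSup {r | ∃ v : Fin n → ℂ, ‖v‖ = 1 ∧ r = ‖M.mulVec v‖}

/-- The norm `‖A‖_∞` of an interval matrix: the maximum of the `∞`-operator norms
over all matrices contained in it. -/
def imatNorm (B : Fin n → Fin n → Set ℂ) : ℝ :=
  sSup {r | ∃ M : Matrix (Fin n) (Fin n) ℂ, (∀ i j, M i j ∈ B i j) ∧ r = opNormInf M}

open Filter Topology Matrix

section FixedPoint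

variable {E : Type*} [NormedAddCommGroup E] [NormedSpace ℝ E] {K : Set E}

-- `z - w ∈ r • (K - K)` says that the Minkowski gauge of `K - K` at `z - w` is at most `r`.
theorem exists_fixedPoint_of_scaled_contraction (hK : IsComplete K) (hKb : Bornology.IsBounded K)
    {x₀ : E} (hx₀ : x₀ ∈ K) {H : E → E} (hmaps : MapsTo H K K) (hcont : ContinuousOn H K)
    {t : ℝ} (ht0 : 0 < t) (ht1 : t < 1)
    (hH : ∀ z ∈ K, ∀ w ∈ K, ∀ r : ℝ, 0 < r →
      z - w ∈ r • (K - K) → H z - H w ∈ (t * r) • (K - K)) :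
    ∃ z ∈ K, H z = z := by
  set a : ℕ → E := fun m => H^[m] x₀
  have ha_mem : ∀ m, a m ∈ K := fun m => hmaps.iterate m hx₀
  have ha_succ : ∀ m, a (m + 1) = H (a m) := fun m => Function.iterate_succ_apply' H m x₀
  have ha_step : ∀ m, a (m + 1) - a m ∈ t ^ m • (K - K) := by
    intro m
    induction m with
    | zero => rw [pow_zero, one_smul]; exact sub_mem_sub (ha_mem 1) (ha_mem 0)
    | succ m ih =>
      have h := hH _ (ha_mem (m + 1)) _ (ha_mem m) (t ^ m) (pow_pos ht0 m) ih
      rwa [← ha_succ, ← ha_succ, ← pow_succ'] at h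
  have hdist : ∀ m, dist (a m) (a (m + 1)) ≤ Metric.diam K * t ^ m := by
    intro m
    obtain ⟨_, ⟨u, hu, v, hv, rfl⟩, huv⟩ := ha_step m
    rw [dist_comm, dist_eq_norm, ← huv, norm_smul, Real.norm_of_nonneg (pow_nonneg ht0.le m),
      mul_comm, ← dist_eq_norm]
    exact mul_le_mul_of_nonneg_right (Metric.dist_le_diam_of_mem hKb hu hv) (pow_nonneg ht0.le m)
  obtain ⟨L, hL, hlim⟩ :=
    cauchySeq_tendsto_of_isComplete hK ha_mem (cauchySeq_of_le_geometric t _ ht1 hdist)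
  refine ⟨L, hL, tendsto_nhds_unique ?_ (hlim.comp (tendsto_add_atTop_nat 1))⟩
  have hHa := (hcont L hL).tendsto.comp (tendsto_nhdsWithin_iff.2 ⟨hlim, .of_forall ha_mem⟩)
  simpa only [Function.comp_def, ← ha_succ] using hHa

theorem exists_norm_sub_le_of_scaled_nonexpansive (hK : IsCompact K) (hKconv : Convex ℝ K)
    {x₀ : E} (hx₀ : x₀ ∈ K) {G : E → E} (hmaps : MapsTo G K K) (hcont : ContinuousOn G K)
    (hG : ∀ z ∈ K, ∀ w ∈ K, ∀ r : ℝ, 0 < r → z - w ∈ r • (K - K) → G z - G w ∈ r • (K - K))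
    {t : ℝ} (ht : t ∈ Ioo 0 1) :
    ∃ z ∈ K, ‖G z - z‖ ≤ (1 - t) * Metric.diam K := by
  obtain ⟨ht0, ht1⟩ := ht
  obtain ⟨z, hz, hfix⟩ := exists_fixedPoint_of_scaled_contraction hK.isComplete hK.isBounded hx₀
    (H := fun z => x₀ + t • (G z - x₀))
    (fun z hz => hKconv.add_smul_sub_mem hx₀ (hmaps hz) ⟨ht0.le, ht1.le⟩)
    (continuousOn_const.add ((hcont.sub continuousOn_const).const_smul t)) ht0 ht1
    (fun z hz w hw r hr hzw => by
      simpa [smul_sub, smul_smul] using smul_mem_smul_set (a := t) (hG z hz w hw r hr hzw))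
  refine ⟨z, hz, ?_⟩
  have hGz : G z - z = (1 - t) • (G z - x₀) := by
    calc G z - z = G z - (x₀ + t • (G z - x₀)) := by rw [hfix]
      _ = (1 - t) • (G z - x₀) := by module
  rw [hGz, norm_smul, Real.norm_of_nonneg (by linarith), ← dist_eq_norm]
  exact mul_le_mul_of_nonneg_left (Metric.dist_le_diam_of_mem hK.isBounded (hmaps hz) hx₀)
    (by linarith)

theorem exists_fixedPoint_of_scaled_nonexpansive (hK : IsCompact K) (hKconv : Convex ℝ K)
    (hne : K.Nonempty) {G : E → E} (hmaps : MapsTo G K K) (hcont : ContinuousOn G K)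
    (hG : ∀ z ∈ K, ∀ w ∈ K, ∀ r : ℝ, 0 < r → z - w ∈ r • (K - K) → G z - G w ∈ r • (K - K)) :
    ∃ z ∈ K, G z = z := by
  obtain ⟨x₀, hx₀⟩ := hne
  obtain ⟨z, hz, hmin⟩ := hK.exists_isMinOn ⟨x₀, hx₀⟩ (hcont.sub continuousOn_id).norm
  refine ⟨z, hz, sub_eq_zero.1 (norm_le_zero_iff.1 ?_)⟩
  have hlim : Tendsto (fun t : ℝ => (1 - t) * Metric.diam K) (𝓝[<] 1) (𝓝 0) := by
    refine (Continuous.tendsto' ?_ 1 0 (by simp)).mono_left nhdsWithin_le_nhds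
    fun_prop
  refine ge_of_tendsto hlim ?_
  filter_upwards [Ioo_mem_nhdsLT zero_lt_one] with t ht
  obtain ⟨w, hw, hGw⟩ :=
    exists_norm_sub_le_of_scaled_nonexpansive hK hKconv hx₀ hmaps hcont hG ht
  exact (hmin hw).trans hGw

end FixedPoint

section MeanValue

variable {E F : Type*} [NormedAddCommGroup E] [NormedSpace ℂ E]
  [NormedAddCommGroup F] [NormedSpace ℂ F] [CompleteSpace F]

theorem exists_mem_sub_eq_apply_of_hasFDerivAt {f : E → F} {f' : E → E →L[ℂ] F}
    {S : Set (E →L[ℂ] F)} (hS : Convex ℝ S) (hSc : IsClosed S) {w z : E}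
    (hf : ∀ y ∈ segment ℝ w z, HasFDerivAt f (f' y) y)
    (hf' : ContinuousOn f' (segment ℝ w z)) (hf'S : ∀ y ∈ segment ℝ w z, f' y ∈ S) :
    ∃ L ∈ S, f z - f w = L (z - w) := by
  set γ : ℝ → E := fun t => w + t • (z - w)
  have hγ : MapsTo γ (Icc 0 1) (segment ℝ w z) := by
    rw [segment_eq_image']
    exact mapsTo_image _ _
  have hcont : ContinuousOn (fun t => f' (γ t)) (Icc 0 1) :=
    hf'.comp (by fun_prop) hγ
  have hint : IntervalIntegrable (fun t => f' (γ t)) MeasureTheory.volume 0 1 :=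
    hcont.intervalIntegrable_of_Icc zero_le_one
  refine ⟨∫ t in (0 : ℝ)..1, f' (γ t), ?_, ?_⟩
  · have hmem := hS.set_average_mem hSc (μ := MeasureTheory.volume) (t := uIoc (0 : ℝ) 1)
      (by simp) (by simp) (MeasureTheory.ae_restrict_of_forall_mem measurableSet_uIoc
        fun t ht => hf'S _ (hγ (Ioc_subset_Icc_self (by simpa using ht))))
      (intervalIntegrable_iff.1 hint)
    rwa [interval_average_eq, sub_zero, inv_one, one_smul] at hmem
  · rw [ContinuousLinearMap.intervalIntegral_apply hint]
    have hderiv : ∀ t ∈ uIcc (0 : ℝ) 1, HasDerivAt (fun s => f (γ s)) (f' (γ t) (z - w)) t := by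
      intro t ht
      rw [uIcc_of_le zero_le_one] at ht
      have hγt : HasDerivAt γ (z - w) t := by
        show HasDerivAt (fun s : ℝ => w + s • (z - w)) _ _
        simpa using ((hasDerivAt_id t).smul_const (z - w)).const_add w
      exact ((hf _ (hγ ht)).restrictScalars ℝ).comp_hasDerivAt t hγt
    rw [intervalIntegral.integral_eq_sub_of_hasDerivAt hderiv
      ((hcont.clm_apply continuousOn_const).intervalIntegrable_of_Icc zero_le_one)]
    simp [γ]

end MeanValue

theorem MvPolynomial.contDiff_eval {σ 𝕜 : Type*} [Fintype σ] [NontriviallyNormedField 𝕜]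
    (p : MvPolynomial σ 𝕜) {k : WithTop ℕ∞} :
    ContDiff 𝕜 k fun x : σ → 𝕜 => MvPolynomial.eval x p := by
  induction p using MvPolynomial.induction_on with
  | C a => simpa using contDiff_const
  | add p q hp hq => simpa using hp.add hq
  | mul_X p i hp => simpa using hp.mul (contDiff_apply 𝕜 𝕜 i)

theorem IsPolyMap.contDiff {F : (Fin n → ℂ) → Fin n → ℂ} (hF : IsPolyMap F) {k : WithTop ℕ∞} :
    ContDiff ℂ k F := by
  refine contDiff_pi.2 fun i => ?_
  obtain ⟨p, hp⟩ := hF i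
  simpa only [hp] using p.contDiff_eval

theorem fderiv_apply_single_eq_jac {F : (Fin n → ℂ) → Fin n → ℂ} {z : Fin n → ℂ}
    (hF : DifferentiableAt ℂ F z) (i j : Fin n) :
    fderiv ℂ F z (Pi.single j 1) i = jac F z i j := by
  rw [jac, fderiv_pi (φ := fun i w => F w i) (differentiableAt_pi.1 hF)]
  rfl

theorem IsPolyMap.exists_matrix_sub_eq_mulVec {F : (Fin n → ℂ) → Fin n → ℂ} (hF : IsPolyMap F)
    {K : Set (Fin n → ℂ)} (hK : Convex ℝ K) {MJ : Fin n → Fin n → Set ℂ}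
    (hMJ : ∀ i j, Convex ℝ (MJ i j)) (hMJc : ∀ i j, IsClosed (MJ i j))
    (hJ : ∀ y ∈ K, ∀ i j, jac F y i j ∈ MJ i j) {z w : Fin n → ℂ} (hz : z ∈ K) (hw : w ∈ K) :
    ∃ M : Matrix (Fin n) (Fin n) ℂ, (∀ i j, M i j ∈ MJ i j) ∧ F z - F w = M *ᵥ (z - w) := by
  have hC1 : ContDiff ℂ 1 F := hF.contDiff
  set S : Set ((Fin n → ℂ) →L[ℂ] Fin n → ℂ) := {L | ∀ i j, L (Pi.single j 1) i ∈ MJ i j}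
  have hS : Convex ℝ S := fun L₁ h₁ L₂ h₂ a b ha hb hab i j => by
    simpa using hMJ i j (h₁ i j) (h₂ i j) ha hb hab
  have hSc : IsClosed S := by
    simp only [S, ofPred_forall]
    exact isClosed_iInter fun i => isClosed_iInter fun j => (hMJc i j).preimage (by fun_prop)
  obtain ⟨L, hL, hsub⟩ := exists_mem_sub_eq_apply_of_hasFDerivAt hS hSc
    (fun y _ => (hC1.differentiable one_ne_zero y).hasFDerivAt)
    (hC1.continuous_fderiv one_ne_zero).continuousOn
    (fun y hy i j => by
      rw [fderiv_apply_single_eq_jac (hC1.differentiable one_ne_zero y)]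
      exact hJ y (hK.segment_subset hw hz hy) i j)
  refine ⟨LinearMap.toMatrix' (L : (Fin n → ℂ) →ₗ[ℂ] Fin n → ℂ), fun i j => ?_, ?_⟩
  · simpa [LinearMap.toMatrix'_apply] using hL i j
  · rw [LinearMap.toMatrix'_mulVec]
    exact hsub

theorem IsRect.isCompact {S : Set ℂ} (h : IsRect S) : IsCompact S := by
  obtain ⟨a, b, c, d, -, -, rfl⟩ := h
  exact isCompact_Icc.reProdIm isCompact_Icc

theorem IsRect.convex {S : Set ℂ} (h : IsRect S) : Convex ℝ S := by
  obtain ⟨a, b, c, d, -, -, rfl⟩ := h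
  exact ((convex_Icc a b).linear_preimage Complex.reLm).inter
    ((convex_Icc c d).linear_preimage Complex.imLm)

theorem boxSet_eq_pi (IV : Fin n → Set ℂ) : boxSet IV = univ.pi IV := by
  ext z
  simp [boxSet]

theorem isCompact_boxSet {IV : Fin n → Set ℂ} (hIV : ∀ j, IsRect (IV j)) :
    IsCompact (boxSet IV) := by
  rw [boxSet_eq_pi]
  exact isCompact_univ_pi fun j => (hIV j).isCompact

theorem convex_boxSet {IV : Fin n → Set ℂ} (hIV : ∀ j, IsRect (IV j)) :
    Convex ℝ (boxSet IV) := by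
  rw [boxSet_eq_pi]
  exact convex_pi fun j _ => (hIV j).convex

theorem cmul_mem {S T : Set ℂ} {a b : ℂ} (ha : a ∈ S) (hb : b ∈ T) : a * b ∈ cmul S T :=
  ⟨⟨a.re * b.re, mem_image2_of_mem (mem_image_of_mem _ ha) (mem_image_of_mem _ hb),
      a.im * b.im, mem_image2_of_mem (mem_image_of_mem _ ha) (mem_image_of_mem _ hb),
      (Complex.mul_re a b).symm⟩,
    ⟨a.re * b.im, mem_image2_of_mem (mem_image_of_mem _ ha) (mem_image_of_mem _ hb),
      a.im * b.re, mem_image2_of_mem (mem_image_of_mem _ ha) (mem_image_of_mem _ hb),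
      (Complex.mul_im a b).symm⟩⟩

theorem one_sub_mul_mem_Bmat {Y M : Matrix (Fin n) (Fin n) ℂ} {MJ : Fin n → Fin n → Set ℂ}
    (hM : ∀ i j, M i j ∈ MJ i j) (i j : Fin n) : (1 - Y * M) i j ∈ Bmat Y MJ i j := by
  rw [Matrix.sub_apply, Matrix.one_apply, Matrix.mul_apply]
  exact sub_mem_sub rfl (finsetSum_mem_finsetSum _ _ _ fun k _ => cmul_mem rfl (hM k j))

theorem mem_Kset {x v z : Fin n → ℂ} {Y N : Matrix (Fin n) (Fin n) ℂ}
    {FX IV : Fin n → Set ℂ} {MJ : Fin n → Fin n → Set ℂ} (hv : ∀ j, v j ∈ FX j)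
    (hN : ∀ i j, N i j ∈ Bmat Y MJ i j) (hz : z ∈ boxSet IV) (i : Fin n) :
    (x - Y *ᵥ v + N *ᵥ (z - x)) i ∈ Kset x Y FX MJ IV i := by
  have hcoord : (x - Y *ᵥ v + N *ᵥ (z - x)) i =
      (x i - ∑ j, Y i j * v j) + ∑ j, (z j - x j) * N i j := by
    simp [Matrix.mulVec, dotProduct, mul_comm]
  rw [hcoord]
  exact add_mem_add
    (sub_mem_sub rfl (finsetSum_mem_finsetSum _ _ _ fun j _ => cmul_mem rfl (hv j)))
    (finsetSum_mem_finsetSum _ _ _ fun j _ => cmul_mem (sub_mem_sub (hz j) rfl) (hN i j))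

theorem mapsTo_smul_sub_of_mapsTo_affine {E : Type*} [AddCommGroup E] [Module ℝ E]
    (T : E →ₗ[ℝ] E) {K : Set E} {c x : E} (hT : MapsTo (fun z => c + T (z - x)) K K) (r : ℝ) :
    MapsTo T (r • (K - K)) (r • (K - K)) := by
  rintro _ ⟨_, ⟨u, hu, v, hv, rfl⟩, rfl⟩
  refine ⟨_, sub_mem_sub (hT hu) (hT hv), ?_⟩
  simp only [map_smul, map_sub]
  congr 1
  abel

theorem sub_mulVec_eq_add_mulVec {ι R : Type*} [Fintype ι] [DecidableEq ι] [CommRing R]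
    {Y M : Matrix ι ι R} {u v z w : ι → R} (h : u - v = M *ᵥ (z - w)) :
    z - Y *ᵥ u = w - Y *ᵥ v + (1 - Y * M) *ᵥ (z - w) := by
  rw [eq_add_of_sub_eq' h, Matrix.sub_mulVec, Matrix.one_mulVec, ← Matrix.mulVec_mulVec,
    Matrix.mulVec_add]
  abel

theorem krawczyk_existence_general (F : (Fin n → ℂ) → Fin n → ℂ) (hF : IsPolyMap F)
    (IV : Fin n → Set ℂ) (hIV : ∀ j, IsRect (IV j))
    (x : Fin n → ℂ) (hx : x ∈ boxSet IV)
    (Y : Matrix (Fin n) (Fin n) ℂ) (hY : IsUnit Y)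
    (FX : Fin n → Set ℂ) (hFX : ∀ j, F x j ∈ FX j)
    (MJ : Fin n → Fin n → Set ℂ) (hMJr : ∀ i j, IsRect (MJ i j))
    (hMJ : ∀ z ∈ boxSet IV, ∀ i j, jac F z i j ∈ MJ i j)
    (hK : ∀ i, Kset x Y FX MJ IV i ⊆ IV i) :
    ∃ z ∈ boxSet IV, F z = 0 := by
  have hmvt : ∀ z ∈ boxSet IV, ∀ w ∈ boxSet IV, ∃ M : Matrix (Fin n) (Fin n) ℂ,
      (∀ i j, M i j ∈ MJ i j) ∧ F z - F w = M *ᵥ (z - w) := fun z hz w hw =>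
    hF.exists_matrix_sub_eq_mulVec (convex_boxSet hIV) (fun i j => (hMJr i j).convex)
      (fun i j => (hMJr i j).isCompact.isClosed) hMJ hz hw
  have haffine : ∀ M : Matrix (Fin n) (Fin n) ℂ, (∀ i j, M i j ∈ MJ i j) →
      MapsTo (fun z => x - Y *ᵥ F x + (1 - Y * M) *ᵥ (z - x)) (boxSet IV) (boxSet IV) :=
    fun M hM z hz i => hK i (mem_Kset hFX (one_sub_mul_mem_Bmat hM) hz i)
  set G : (Fin n → ℂ) → Fin n → ℂ := fun z => z - Y *ᵥ F z
  have hmaps : MapsTo G (boxSet IV) (boxSet IV) := by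
    intro z hz
    obtain ⟨M, hM, hFzx⟩ := hmvt z hz x hx
    show z - Y *ᵥ F z ∈ boxSet IV
    rw [sub_mulVec_eq_add_mulVec hFzx]
    exact haffine M hM hz
  have hnonexp : ∀ z ∈ boxSet IV, ∀ w ∈ boxSet IV, ∀ r : ℝ, 0 < r →
      z - w ∈ r • (boxSet IV - boxSet IV) → G z - G w ∈ r • (boxSet IV - boxSet IV) := by
    intro z hz w hw r _ hzw
    obtain ⟨M, hM, hFzw⟩ := hmvt z hz w hw
    rw [sub_eq_of_eq_add' (sub_mulVec_eq_add_mulVec hFzw)]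
    exact mapsTo_smul_sub_of_mapsTo_affine ((1 - Y * M).mulVecLin.restrictScalars ℝ)
      (haffine M hM) r hzw
  have hcont : Continuous G :=
    continuous_id.sub (continuous_const.matrix_mulVec (hF.contDiff (k := 0)).continuous)
  obtain ⟨z, hz, hfix⟩ := exists_fixedPoint_of_scaled_nonexpansive (isCompact_boxSet hIV)
    (convex_boxSet hIV) ⟨x, hx⟩ hmaps hcont.continuousOn hnonexp
  refine ⟨z, hz, Matrix.mulVec_injective_iff_isUnit.2 hY ?_⟩
  rw [Matrix.mulVec_zero]
  exact sub_eq_self.1 hfix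

theorem krawczyk_existence (F : (Fin n → ℂ) → Fin n → ℂ) (hF : IsPolyMap F)
    (IV : Fin n → Set ℂ) (hIV : ∀ j, IsRect (IV j))
    (x : Fin n → ℂ) (hx : x ∈ boxSet IV)
    (Y : Matrix (Fin n) (Fin n) ℂ) (hY : IsUnit Y)
    (FX : Fin n → Set ℂ) (hFXr : ∀ j, IsRect (FX j)) (hFX : ∀ j, F x j ∈ FX j)
    (MJ : Fin n → Fin n → Set ℂ) (hMJr : ∀ i j, IsRect (MJ i j))
    (hMJ : ∀ z ∈ boxSet IV, ∀ i j, jac F z i j ∈ MJ i j)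
    (hK : ∀ i, Kset x Y FX MJ IV i ⊆ IV i) :
    ∃ z ∈ boxSet IV, F z = 0 :=
  krawczyk_existence_general F hF IV hIV x hx Y hY FX hFX MJ hMJr hMJ hK
end
end
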